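/- Let −1 < p ≤ 0. For all x > 0, one has ((p+2)/(p+1))·𝓘_{p+1}(x) < 1/(p+1) + 𝓘_p(x), i.e. the lower Frame-type bound with constant α = 0 for modified Bessel functions. -/

import Mathlib

open Real

noncomputable def besselJn (p x : ℝ) : ℝ :=
  ∑' n : ℕ, (-(1:ℝ)/4)^n * x^(2*n) / ((Real.Gamma (p+n+1) / Real.Gamma (p+1)) * n.factorial)

noncomputable def besselIn (p x : ℝ) : ℝ :=
  ∑' n : ℕ, ((1:ℝ)/4)^n * x^(2*n) / ((Real.Gamma (p+n+1) / Real.Gamma (p+1)) * n.factorial)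

noncomputable def besselJ (p x : ℝ) : ℝ :=
  ∑' n : ℕ, (-1:ℝ)^n * (x/2)^(p+2*n) / (n.factorial * Real.Gamma (p+n+1))

/-!
Write `aₙ(p) = (x²/4)ⁿ Γ(p+1) / (n! Γ(p+n+1))` for the terms of `𝓘_p(x)`. From `Γ(s+1) = s Γ(s)`,
`((p+2)/(p+1)) aₙ(p+1) = ((p+2)/(p+n+1)) aₙ(p)`. For `n = 0` this is `(p+2)/(p+1) = 1/(p+1) + a₀(p)`,
for `n ≥ 1` it is at most `aₙ(p)`, and strictly less for `n ≥ 2` as soon as `x ≠ 0`.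
Summing the terms gives the strict inequality.
-/

lemma Real.Gamma_le_Gamma_add_nat {s : ℝ} (hs : 1 ≤ s) (n : ℕ) : Gamma s ≤ Gamma (s + n) := by
  induction n with
  | zero => simp
  | succ n ih =>
    have hsn : 1 ≤ s + n := by linarith [n.cast_nonneg (α := ℝ)]
    calc Gamma s ≤ Gamma (s + n) := ih
      _ ≤ (s + n) * Gamma (s + n) := le_mul_of_one_le_left (by positivity) hsn
      _ = Gamma (s + (n + 1 : ℕ)) := by
        rw [Nat.cast_succ, ← add_assoc, Gamma_add_one (by linarith)]

lemma Real.Gamma_div_Gamma_add_nat_le {q : ℝ} (hq : -1 < q) (n : ℕ) :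
    Gamma (q + 1) / Gamma (q + n + 1) ≤ max 1 (q + 1)⁻¹ := by
  have hΓ : 0 < Gamma (q + 1) := Gamma_pos_of_pos (by linarith)
  rcases n with _ | m
  · simp [hΓ.ne']
  · have hmono : (q + 1) * Gamma (q + 1) ≤ Gamma (q + (m + 1 : ℕ) + 1) := by
      rw [← Gamma_add_one (by linarith), show q + (m + 1 : ℕ) + 1 = q + 1 + 1 + m by push_cast; ring]
      exact Gamma_le_Gamma_add_nat (by linarith) m
    calc Gamma (q + 1) / Gamma (q + (m + 1 : ℕ) + 1)
        ≤ Gamma (q + 1) / ((q + 1) * Gamma (q + 1)) :=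
          div_le_div_of_nonneg_left hΓ.le (mul_pos (by linarith) hΓ) hmono
      _ = (q + 1)⁻¹ := by field_simp
      _ ≤ max 1 (q + 1)⁻¹ := le_max_right _ _

noncomputable def besselInTerm (p x : ℝ) (n : ℕ) : ℝ :=
  ((1:ℝ)/4)^n * x^(2*n) / ((Real.Gamma (p+n+1) / Real.Gamma (p+1)) * n.factorial)

lemma besselIn_eq_tsum (p x : ℝ) : besselIn p x = ∑' n, besselInTerm p x n := rfl

lemma besselInTerm_eq (p x : ℝ) (n : ℕ) :
    besselInTerm p x n = (x ^ 2 / 4) ^ n / n.factorial * (Gamma (p + 1) / Gamma (p + n + 1)) := by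
  rw [besselInTerm, pow_mul, div_pow, div_pow, one_pow]
  field_simp

lemma besselInTerm_zero {p : ℝ} (hp : -1 < p) (x : ℝ) : besselInTerm p x 0 = 1 := by
  have : Gamma (p + 1) ≠ 0 := (Gamma_pos_of_pos (by linarith)).ne'
  simp [besselInTerm_eq, this]

lemma besselInTerm_pos {p x : ℝ} (hp : -1 < p) (hx : x ≠ 0) (n : ℕ) : 0 < besselInTerm p x n := by
  have : 0 < p + n + 1 := by linarith [n.cast_nonneg (α := ℝ)]
  have : 0 < p + 1 := by linarith
  rw [besselInTerm_eq]
  positivity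

lemma besselInTerm_nonneg {p : ℝ} (hp : -1 < p) (x : ℝ) (n : ℕ) : 0 ≤ besselInTerm p x n := by
  have : 0 < p + n + 1 := by linarith [n.cast_nonneg (α := ℝ)]
  have : 0 < p + 1 := by linarith
  rw [besselInTerm_eq]
  positivity

lemma summable_besselInTerm {p : ℝ} (hp : -1 < p) (x : ℝ) : Summable (besselInTerm p x) := by
  refine .of_nonneg_of_le (besselInTerm_nonneg hp x) (fun n => ?_)
    ((summable_pow_div_factorial (x ^ 2 / 4)).mul_right (max 1 (p + 1)⁻¹))
  rw [besselInTerm_eq]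
  exact mul_le_mul_of_nonneg_left (Gamma_div_Gamma_add_nat_le hp n) (by positivity)

lemma besselInTerm_add_one {p : ℝ} (hp : -1 < p) (x : ℝ) (n : ℕ) :
    besselInTerm (p + 1) x n = (p + 1) / (p + n + 1) * besselInTerm p x n := by
  have hpn : 0 < p + n + 1 := by linarith [n.cast_nonneg (α := ℝ)]
  have hΓ : Gamma (p + 1) ≠ 0 := (Gamma_pos_of_pos (by linarith)).ne'
  have hΓn : Gamma (p + n + 1) ≠ 0 := (Gamma_pos_of_pos hpn).ne'
  rw [besselInTerm_eq, besselInTerm_eq, show p + 1 + n + 1 = p + n + 1 + 1 by ring,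
    Gamma_add_one hpn.ne', Gamma_add_one (by linarith)]
  field_simp

lemma frame_mul_besselInTerm_add_one {p : ℝ} (hp : -1 < p) (x : ℝ) (n : ℕ) :
    (p + 2) / (p + 1) * besselInTerm (p + 1) x n = (p + 2) / (p + n + 1) * besselInTerm p x n := by
  have : p + 1 ≠ 0 := by linarith
  rw [besselInTerm_add_one hp, ← mul_assoc, div_mul_div_cancel₀ this]

lemma frame_mul_besselInTerm_add_one_le {p : ℝ} (hp : -1 < p) (x : ℝ) {n : ℕ} (hn : 1 ≤ n) :
    (p + 2) / (p + 1) * besselInTerm (p + 1) x n ≤ besselInTerm p x n := by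
  have hn' : (1 : ℝ) ≤ n := by exact_mod_cast hn
  have hpn : 0 < p + n + 1 := by linarith
  rw [frame_mul_besselInTerm_add_one hp]
  exact mul_le_of_le_one_left (besselInTerm_nonneg hp x n) ((div_le_one hpn).2 (by linarith))

lemma frame_mul_besselInTerm_add_one_lt {p x : ℝ} (hp : -1 < p) (hx : x ≠ 0) {n : ℕ} (hn : 2 ≤ n) :
    (p + 2) / (p + 1) * besselInTerm (p + 1) x n < besselInTerm p x n := by
  have hn' : (2 : ℝ) ≤ n := by exact_mod_cast hn
  rw [frame_mul_besselInTerm_add_one hp]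
  exact mul_lt_of_lt_one_left (besselInTerm_pos hp hx n) ((div_lt_one (by linarith)).2 (by linarith))

theorem modified_frame_lower (p : ℝ) (hp1 : -1 < p) (x : ℝ) (hx : 0 < x) :
    ((p+2)/(p+1)) * besselIn (p+1) x < 1/(p+1) + besselIn p x := by
  have hp : 0 < p + 1 := by linarith
  set e : ℕ → ℝ := fun n => if n = 0 then 1 / (p + 1) else 0
  have hsum := summable_besselInTerm hp1 x
  have hnonneg (n : ℕ) : 0 ≤ (p + 2) / (p + 1) * besselInTerm (p + 1) x n :=
    mul_nonneg (div_nonneg (by linarith) hp.le) (besselInTerm_nonneg (by linarith) x n)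
  have hle (n : ℕ) : (p + 2) / (p + 1) * besselInTerm (p + 1) x n ≤ besselInTerm p x n + e n := by
    rcases n with _ | n
    · refine le_of_eq ?_
      rw [besselInTerm_zero (by linarith), besselInTerm_zero hp1]
      simp only [e, if_pos]
      field_simp
      ring
    · simpa [e] using frame_mul_besselInTerm_add_one_le hp1 x n.succ_pos
  have hlt : (p + 2) / (p + 1) * besselInTerm (p + 1) x 2 < besselInTerm p x 2 + e 2 := by
    simpa [e] using frame_mul_besselInTerm_add_one_lt hp1 hx.ne' le_rfl
  calc (p + 2) / (p + 1) * besselIn (p + 1) x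
      = ∑' n, (p + 2) / (p + 1) * besselInTerm (p + 1) x n := by
        rw [besselIn_eq_tsum, tsum_mul_left]
    _ < ∑' n, (besselInTerm p x n + e n) :=
        Summable.tsum_lt_tsum_of_nonneg hnonneg hle hlt (hsum.add (hasSum_ite_eq 0 _).summable)
    _ = 1 / (p + 1) + besselIn p x := by
        rw [hsum.tsum_add (hasSum_ite_eq 0 _).summable, tsum_ite_eq, besselIn_eq_tsum, add_comm]
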